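/- arXiv:1201.6462 — 2 statements merged into one kernel-verified Lean document; each statement's English description precedes it below -/
import Mathlib

section
/- For any two k-clusterings C, C' of V, the relative regret f(C') = cost(C') − cost(C) satisfies f(C') = (1/2) Σ_{i=1}^k Σ_{j=1}^k F_{i,j}(C') + Σ_{j=1}^k Σ_{1 ≤ i₁ < i₂ ≤ k} F_{i₁,i₂,j}(C'), where F_{i,j}(C') = Σ_{u ∈ C_{ij}} Σ_{v ∈ C_i \ C_{ij}} f_{u,v}(C') and F_{i₁,i₂,j}(C') = Σ_{u ∈ C_{i₁ j}} Σ_{v ∈ C_{i₂ j}} f_{u,v}(C'). -/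
open Finset

attribute [local instance] Classical.propDecidable

/-- A `k`-clustering of `V` is encoded by its cluster-assignment function `Cl : V → Fin k`;
two points are in the same cluster iff they have the same assigned index.
`cluster Cl i` is the `i`-th cluster `C_i`, as a finset. -/
noncomputable def cluster {V : Type*} [Fintype V] {k : ℕ} (Cl : V → Fin k) (i : Fin k) : Finset V :=
  Finset.univ.filter fun v => Cl v = i

/-- `cost_{u,v}(C) = 1[(u,v) ∈ E]·1[u ≢_C v] + 1[(u,v) ∉ E]·1[u ≡_C v]`. -/
noncomputable def costuv {V : Type*} {k : ℕ} (G : SimpleGraph V) (Cl : V → Fin k) (u v : V) : ℝ :=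
  (if G.Adj u v then (if Cl u = Cl v then 0 else 1) else (if Cl u = Cl v then 1 else 0))

/-- `cost(C)`: the number of unordered pairs of distinct points on which the clustering
`Cl` disagrees with the graph `G` (each unordered pair counted once, via half the sum
over ordered pairs). -/
noncomputable def cost {V : Type*} [Fintype V] {k : ℕ} (G : SimpleGraph V) (Cl : V → Fin k) : ℝ :=
  (1 / 2) * ∑ u : V, ∑ v : V, if u ≠ v then costuv G Cl u v else 0

/-- The disagreement distance between two `k`-clusterings:
`d(C,C') = (1/2) Σ_{u ≠ v} (1[u ≡_{C'} v]·1[u ≢_C v] + 1[u ≡_C v]·1[u ≢_{C'} v])`. -/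
noncomputable def dd {V : Type*} [Fintype V] {k : ℕ} (Cl Cl' : V → Fin k) : ℝ :=
  (1 / 2) * ∑ u : V, ∑ v : V, if u ≠ v then
      ((if Cl' u = Cl' v ∧ ¬Cl u = Cl v then (1 : ℝ) else 0) +
        (if Cl u = Cl v ∧ ¬Cl' u = Cl' v then (1 : ℝ) else 0))
    else 0

/-- `f_{u,v}(C') = cost_{u,v}(C') - cost_{u,v}(C)`. -/
noncomputable def fuv {V : Type*} {k : ℕ} (G : SimpleGraph V) (Cl Cl' : V → Fin k) (u v : V) : ℝ :=
  costuv G Cl' u v - costuv G Cl u v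

/-!
`f_{u,v}` vanishes unless exactly one of `C`, `C'` separates `u` and `v`. The ordered pairs
joined by `C` but split by `C'` are exactly those of the rectangles `C_{ij} × (C_i \ C_{ij})`, and
both orientations of each such pair occur, whence the factor `1/2`. The pairs joined by `C'` but
split by `C` lie in the rectangles `C_{i₁j} × C_{i₂j}`; by symmetry of `f_{u,v}` the orientation
with `i₁ < i₂` carries half of their contribution, matching the `1/2` in `cost`.
-/

theorem Finset.sum_fiberwise_dep {ι κ M : Type*} [Fintype κ] [DecidableEq κ] [AddCommMonoid M]
    (s : Finset ι) (g : ι → κ) (F : κ → ι → M) :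
    ∑ j, ∑ i ∈ s with g i = j, F j i = ∑ i ∈ s, F (g i) i := by
  rw [← Finset.sum_fiberwise s g fun i => F (g i) i]
  refine sum_congr rfl fun j _ => sum_congr rfl fun i hi => ?_
  rw [(mem_filter.mp hi).2]

theorem Finset.sum_sum_fiberwise_dep {ι κ M : Type*} [Fintype κ] [DecidableEq κ]
    [AddCommMonoid M] (s : Finset ι) (g : ι → κ) (F : κ → κ → ι → ι → M) :
    ∑ j₁, ∑ j₂, ∑ u ∈ s with g u = j₁, ∑ v ∈ s with g v = j₂, F j₁ j₂ u v
      = ∑ u ∈ s, ∑ v ∈ s, F (g u) (g v) u v := by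
  rw [← Finset.sum_fiberwise_dep s g fun j₁ u => ∑ v ∈ s, F j₁ (g v) u v]
  refine sum_congr rfl fun j₁ _ => ?_
  rw [sum_comm]
  exact sum_congr rfl fun u _ => Finset.sum_fiberwise_dep s g _

section Clusters

variable {V M : Type*} [Fintype V] [AddCommMonoid M] {k : ℕ}

theorem sum_cluster (Cl : V → Fin k) (F : Fin k → V → M) :
    ∑ i, ∑ u ∈ cluster Cl i, F i u = ∑ u, F (Cl u) u :=
  Finset.sum_fiberwise_dep _ Cl F

theorem cluster_inter_cluster (C C' : V → Fin k) (i j : Fin k) :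
    cluster C i ∩ cluster C' j = {u ∈ cluster C i | C' u = j} := by
  ext u
  simp [cluster]

theorem cluster_inter_cluster' (C C' : V → Fin k) (i j : Fin k) :
    cluster C i ∩ cluster C' j = {u ∈ cluster C' j | C u = i} := by
  ext u
  simp [cluster, and_comm]

theorem cluster_sdiff_inter_cluster (C C' : V → Fin k) (i j : Fin k) :
    cluster C i \ (cluster C i ∩ cluster C' j) = {u ∈ cluster C i | C' u ≠ j} := by
  ext u
  simp [cluster]

theorem sum_cluster_inter_cluster (C C' : V → Fin k) (F : Fin k → Fin k → V → M) :
    ∑ i, ∑ j, ∑ u ∈ cluster C i ∩ cluster C' j, F i j u = ∑ u, F (C u) (C' u) u := by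
  simp only [cluster_inter_cluster, Finset.sum_fiberwise_dep, sum_cluster C fun i u => F i (C' u) u]

theorem sum_rectangles_within_clusters (C C' : V → Fin k) (g : V → V → M) :
    ∑ i, ∑ j, ∑ u ∈ cluster C i ∩ cluster C' j,
        ∑ v ∈ cluster C i \ (cluster C i ∩ cluster C' j), g u v
      = ∑ u, ∑ v, if C u = C v ∧ C' u ≠ C' v then g u v else 0 := by
  simp only [cluster_sdiff_inter_cluster, sum_cluster_inter_cluster C C'
    fun i j u => ∑ v ∈ cluster C i with C' v ≠ j, g u v]
  simp [cluster, filter_filter, sum_filter, eq_comm]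

theorem sum_rectangles_across_clusters (C C' : V → Fin k) (g : V → V → M) :
    ∑ j, ∑ i₁, ∑ i₂, (if i₁ < i₂ then
        ∑ u ∈ cluster C i₁ ∩ cluster C' j, ∑ v ∈ cluster C i₂ ∩ cluster C' j, g u v else 0)
      = ∑ u, ∑ v, if C u < C v then (if C' u = C' v then g u v else 0) else 0 := by
  simp only [cluster_inter_cluster' C C', ite_sum_zero]
  simp only [sum_sum_fiberwise_dep]
  rw [sum_cluster C']
  simp [cluster, sum_filter, ← ite_and, and_comm, eq_comm]

end Clusters

section Regret

variable {V : Type*} {k : ℕ} (G : SimpleGraph V)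

theorem costuv_comm (Cl : V → Fin k) (u v : V) : costuv G Cl u v = costuv G Cl v u := by
  simp only [costuv, G.adj_comm u v, eq_comm (a := Cl u)]

theorem costuv_self (Cl : V → Fin k) (u : V) : costuv G Cl u u = 1 := by
  simp [costuv]

theorem fuv_comm (C C' : V → Fin k) (u v : V) : fuv G C C' u v = fuv G C C' v u := by
  rw [fuv, fuv, costuv_comm, costuv_comm G C]

theorem fuv_eq_zero_of_iff {C C' : V → Fin k} {u v : V} (h : C u = C v ↔ C' u = C' v) :
    fuv G C C' u v = 0 := by
  simp [fuv, costuv, h]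

theorem fuv_eq_add (C C' : V → Fin k) (u v : V) :
    fuv G C C' u v = (if C u = C v ∧ C' u ≠ C' v then fuv G C C' u v else 0)
      + (if C u < C v then (if C' u = C' v then fuv G C C' u v else 0) else 0)
      + if C v < C u then (if C' u = C' v then fuv G C C' u v else 0) else 0 := by
  by_cases h' : C' u = C' v <;> rcases lt_trichotomy (C u) (C v) with h | h | h
  · simp [h, h', h.ne, h.not_gt]
  · simp [h, h', fuv_eq_zero_of_iff G (iff_of_true h h')]
  · simp [h, h', h.ne', h.not_gt]
  · simp [h', fuv_eq_zero_of_iff G (iff_of_false h.ne h')]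
  · simp [h, h']
  · simp [h', fuv_eq_zero_of_iff G (iff_of_false h.ne' h')]

theorem cost_sub_cost [Fintype V] (C C' : V → Fin k) :
    cost G C' - cost G C = 1 / 2 * ∑ u, ∑ v, fuv G C C' u v := by
  simp only [cost, ← mul_sub, ← sum_sub_distrib]
  congr 1
  refine sum_congr rfl fun u _ => sum_congr rfl fun v _ => ?_
  by_cases h : u = v
  · simp [h, fuv, costuv_self]
  · simp [h, fuv]

end Regret

/-- For any two `k`-clusterings `C, C'` of `V`, the relative regret
`f(C') = cost(C') − cost(C)` decomposes along the distance-contributing rectangles: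
`f(C') = (1/2) Σ_i Σ_j F_{i,j}(C') + Σ_j Σ_{i₁<i₂} F_{i₁,i₂,j}(C')`, where
`F_{i,j}(C') = Σ_{u ∈ C_{ij}} Σ_{v ∈ C_i \ C_{ij}} f_{u,v}(C')` and
`F_{i₁,i₂,j}(C') = Σ_{u ∈ C_{i₁j}} Σ_{v ∈ C_{i₂j}} f_{u,v}(C')`. -/
theorem stmt5 {V : Type*} [Fintype V] {k : ℕ} (G : SimpleGraph V) (C C' : V → Fin k) :
    cost G C' - cost G C =
      (1 / 2) * ∑ i : Fin k, ∑ j : Fin k,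
          ∑ u ∈ cluster C i ∩ cluster C' j,
            ∑ v ∈ cluster C i \ (cluster C i ∩ cluster C' j), fuv G C C' u v
        + ∑ j : Fin k, ∑ i₁ : Fin k, ∑ i₂ : Fin k,
            if i₁ < i₂ then
              ∑ u ∈ cluster C i₁ ∩ cluster C' j,
                ∑ v ∈ cluster C i₂ ∩ cluster C' j, fuv G C C' u v
            else 0 := by
  have hswap : (∑ u, ∑ v, if C v < C u then (if C' u = C' v then fuv G C C' u v else 0) else 0)
      = ∑ u, ∑ v, if C u < C v then (if C' u = C' v then fuv G C C' u v else 0) else 0 := by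
    rw [sum_comm]
    refine sum_congr rfl fun u _ => sum_congr rfl fun v _ => ?_
    rw [fuv_comm G C C' v u]
    exact if_congr Iff.rfl (if_congr eq_comm rfl rfl) rfl
  calc cost G C' - cost G C = 1 / 2 * ∑ u, ∑ v, fuv G C C' u v := cost_sub_cost G C C'
    _ = 1 / 2 * ((∑ u, ∑ v, if C u = C v ∧ C' u ≠ C' v then fuv G C C' u v else 0)
          + (∑ u, ∑ v, if C u < C v then (if C' u = C' v then fuv G C C' u v else 0) else 0)
          + ∑ u, ∑ v, if C v < C u then (if C' u = C' v then fuv G C C' u v else 0) else 0) := by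
      simp only [← sum_add_distrib, ← fuv_eq_add]
    _ = _ := by
      rw [hswap, sum_rectangles_within_clusters, sum_rectangles_across_clusters]
      ring
end

section
/- Let k ≥ 2 be an integer and let b₁, b₂, c₁, c₂ be real numbers with 0 < c₂ ≤ c₁, 0 ≤ b₂ ≤ c₂, 0 ≤ b₁ ≤ c₂/k, and b₁(c₁ − b₁) ≤ b₂(c₂ − b₂). Then b₁ ≤ 2b₂. -/
/-- On `[0, c/2]` the parabola `x (c - x)` dominates the chord `c x / 2`, while
`y (c - y) ≤ c y` for every `y`; comparing the two gives `x ≤ 2 y`. -/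
theorem le_two_mul_of_mul_sub_le_mul_sub {b₁ b₂ c₁ c₂ : ℝ} (hc₂ : 0 < c₂) (hcc : c₂ ≤ c₁)
    (hb₁0 : 0 ≤ b₁) (hb₁ : b₁ ≤ c₂ / 2) (h : b₁ * (c₁ - b₁) ≤ b₂ * (c₂ - b₂)) :
    b₁ ≤ 2 * b₂ := by
  have key : c₂ * b₁ ≤ c₂ * (2 * b₂) :=
    calc c₂ * b₁ ≤ 2 * (b₁ * (c₂ - b₁)) := by nlinarith
      _ ≤ 2 * (b₁ * (c₁ - b₁)) := by gcongr
      _ ≤ 2 * (b₂ * (c₂ - b₂)) := by gcongr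
      _ ≤ c₂ * (2 * b₂) := by nlinarith [sq_nonneg b₂]
  exact le_of_mul_le_mul_left key hc₂

theorem stmt18_general (k : ℕ) (hk : 2 ≤ k) (b₁ b₂ c₁ c₂ : ℝ)
    (hc₂ : 0 < c₂) (hcc : c₂ ≤ c₁)
    (hb₁0 : 0 ≤ b₁) (hb₁ : b₁ ≤ c₂ / (k : ℝ))
    (h : b₁ * (c₁ - b₁) ≤ b₂ * (c₂ - b₂)) :
    b₁ ≤ 2 * b₂ := by
  have hk' : (2 : ℝ) ≤ k := by exact_mod_cast hk
  exact le_two_mul_of_mul_sub_le_mul_sub hc₂ hcc hb₁0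
    (hb₁.trans (div_le_div_of_nonneg_left hc₂.le two_pos hk')) h

/-- Let `k ≥ 2` be an integer and `b₁, b₂, c₁, c₂` real numbers with
`0 < c₂ ≤ c₁`, `0 ≤ b₂ ≤ c₂`, `0 ≤ b₁ ≤ c₂/k`, and `b₁(c₁ − b₁) ≤ b₂(c₂ − b₂)`.
Then `b₁ ≤ 2 b₂`. -/
theorem stmt18 (k : ℕ) (hk : 2 ≤ k) (b₁ b₂ c₁ c₂ : ℝ)
    (hc₂ : 0 < c₂) (hcc : c₂ ≤ c₁) (hb₂0 : 0 ≤ b₂) (hb₂ : b₂ ≤ c₂)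
    (hb₁0 : 0 ≤ b₁) (hb₁ : b₁ ≤ c₂ / (k : ℝ))
    (h : b₁ * (c₁ - b₁) ≤ b₂ * (c₂ - b₂)) :
    b₁ ≤ 2 * b₂ :=
  stmt18_general k hk b₁ b₂ c₁ c₂ hc₂ hcc hb₁0 hb₁ h
end
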